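/- For a proper convex function R: R^d → R ∪ {±∞} and x ∈ R^d such that ∂R(x) is nonempty, compact, and does not contain the origin, the statistical dimension of the descent cone satisfies δ(D(R,x)) ≤ inf_{τ ≥ 0} E[dist²(g, τ·∂R(x))], where g ~ N(0, I_d). -/

import Mathlib

open MeasureTheory ProbabilityTheory
open scoped Pointwise

noncomputable def stdG (ι : Type*) [Fintype ι] : Measure (ι → ℝ) :=
  Measure.pi fun _ => gaussianReal 0 1

/-- The standard Gaussian measure on the Euclidean space `ℝ^d`. -/
noncomputable def stdGE (d : ℕ) : Measure (EuclideanSpace ℝ (Fin d)) :=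
  (stdG (Fin d)).map (MeasurableEquiv.toLp 2 (Fin d → ℝ))

/-- `P` is the Euclidean (nearest-point) projection onto the set `C`. -/
def IsProjOn {d : ℕ} (C : Set (EuclideanSpace ℝ (Fin d)))
    (P : EuclideanSpace ℝ (Fin d) → EuclideanSpace ℝ (Fin d)) : Prop :=
  ∀ x, P x ∈ C ∧ ∀ y ∈ C, ‖x - P x‖ ≤ ‖x - y‖

/-- Descent cone of `R` at `x₀`. -/
def descentCone {d : ℕ} (R : EuclideanSpace ℝ (Fin d) → EReal)
    (x₀ : EuclideanSpace ℝ (Fin d)) : Set (EuclideanSpace ℝ (Fin d)) :=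
  {y | ∃ τ : ℝ, 0 < τ ∧ R (x₀ + τ • y) ≤ R x₀}

/-- Proper convex extended-real-valued function (convexity via the epigraph). -/
def ProperConvexFn {d : ℕ} (R : EuclideanSpace ℝ (Fin d) → EReal) : Prop :=
  (∀ x, R x ≠ ⊥) ∧ (∃ x, R x ≠ ⊤) ∧
    Convex ℝ {p : EuclideanSpace ℝ (Fin d) × ℝ | R p.1 ≤ (p.2 : EReal)}

/-- Subdifferential of an extended-real-valued convex function. -/
def subdiff {d : ℕ} (R : EuclideanSpace ℝ (Fin d) → EReal)
    (x : EuclideanSpace ℝ (Fin d)) : Set (EuclideanSpace ℝ (Fin d)) :=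
  {z | ∀ y, R x + ((inner (𝕜 := ℝ) z (y - x) : ℝ) : EReal) ≤ R y}

/-! ### Auxiliary measure-theoretic lemmas -/

instance stdGE_isProbabilityMeasure (d : ℕ) : IsProbabilityMeasure (stdGE d) := by
  unfold stdGE stdG
  exact Measure.isProbabilityMeasure_map (MeasurableEquiv.toLp 2 (Fin d → ℝ)).measurable.aemeasurable

lemma integrable_sq_gaussian : Integrable (fun x : ℝ => x ^ 2) (gaussianReal 0 1) := by
  rw [gaussianReal_of_var_ne_zero 0 one_ne_zero,
    integrable_withDensity_iff (measurable_gaussianPDF 0 1)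
      (ae_of_all _ fun x => ENNReal.ofReal_lt_top)]
  have h := (integrable_rpow_mul_exp_neg_mul_sq (b := 1/2) one_half_pos (s := 2)
    (by norm_num)).const_mul ((Real.sqrt (2 * Real.pi))⁻¹)
  refine h.congr (ae_of_all _ fun y => ?_)
  simp only [gaussianPDF, gaussianPDFReal, ENNReal.toReal_ofReal_eq_iff]
  rw [ENNReal.toReal_ofReal (by positivity)]
  rw [show (y : ℝ) ^ (2:ℝ) = y ^ 2 by
    rw [show (2:ℝ) = ((2:ℕ):ℝ) by norm_num, Real.rpow_natCast]]
  push_cast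
  ring_nf

lemma stdG_map_eval {ι : Type*} [Fintype ι] (i : ι) :
    (stdG ι).map (fun g => g i) = gaussianReal 0 1 := by
  classical
  ext s hs
  rw [Measure.map_apply (measurable_pi_apply i) hs]
  have : (fun g : ι → ℝ => g i) ⁻¹' s
      = Set.pi Set.univ (Function.update (fun _ => Set.univ) i s) := by
    rw [← Set.eval_preimage]
  rw [this, stdG, Measure.pi_pi]
  rw [Finset.prod_eq_single i (fun j _ hj => by
    simp [Function.update_apply, hj]) (by simp)]
  simp

lemma integrable_sq_eval {ι : Type*} [Fintype ι] (i : ι) :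
    Integrable (fun g : ι → ℝ => g i ^ 2) (stdG ι) := by
  have hg := integrable_sq_gaussian
  exact (integrable_map_measure (f := fun g : ι → ℝ => g i)
    (g := fun x : ℝ => x ^ 2)
    (by rw [stdG_map_eval]; exact hg.aestronglyMeasurable)
    (measurable_pi_apply i).aemeasurable).mp (by rw [stdG_map_eval]; exact hg)

lemma integrable_normsq_stdGE (d : ℕ) :
    Integrable (fun g : EuclideanSpace ℝ (Fin d) => ‖g‖ ^ 2) (stdGE d) := by
  have h : ∀ g : EuclideanSpace ℝ (Fin d), ‖g‖ ^ 2 = ∑ i, g i ^ 2 := by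
    intro g
    rw [EuclideanSpace.norm_eq, Real.sq_sqrt (by positivity)]
    simp [sq_abs]
  simp only [h]
  exact integrable_finset_sum _ fun i _ => by
    unfold stdGE; exact (integrable_map_equiv _ _).mpr (integrable_sq_eval i)

/-! ### Auxiliary geometric lemmas -/

open scoped RealInnerProductSpace

section Geom
variable {d : ℕ} {R : EuclideanSpace ℝ (Fin d) → EReal} {x : EuclideanSpace ℝ (Fin d)}

lemma zero_mem_descentCone : (0 : EuclideanSpace ℝ (Fin d)) ∈ descentCone R x :=
  ⟨1, one_pos, by simp⟩

lemma smul_mem_closure_descentCone {t : ℝ} (ht : 0 ≤ t)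
    {p : EuclideanSpace ℝ (Fin d)} (hp : p ∈ closure (descentCone R x)) :
    t • p ∈ closure (descentCone R x) := by
  rcases eq_or_lt_of_le ht with h | h
  · rw [← h, zero_smul]
    exact subset_closure zero_mem_descentCone
  · have hsub : closure (descentCone R x) ⊆
        (fun y => t • y) ⁻¹' closure (descentCone R x) := by
      apply closure_minimal _ (isClosed_closure.preimage (continuous_const_smul t))
      rintro y ⟨τ, hτ, hy⟩
      refine subset_closure ⟨τ / t, div_pos hτ h, ?_⟩
      rwa [smul_smul, div_mul_cancel₀ _ h.ne']
    exact hsub hp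

lemma inner_nonpos_of_subdiff (hR : ProperConvexFn R)
    {z : EuclideanSpace ℝ (Fin d)} (hz : z ∈ subdiff R x)
    {p : EuclideanSpace ℝ (Fin d)} (hp : p ∈ closure (descentCone R x)) :
    ⟪z, p⟫ ≤ 0 := by
  have hbot : R x ≠ ⊥ := hR.1 x
  have htop : R x ≠ ⊤ := by
    intro htop
    obtain ⟨y₀, hy₀⟩ := hR.2.1
    have := hz y₀
    rw [htop, EReal.top_add_coe] at this
    exact hy₀ (top_le_iff.mp this)
  set a : ℝ := (R x).toReal with ha
  have hRx : R x = (a : EReal) := (EReal.coe_toReal htop hbot).symm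
  have hD : ∀ y ∈ descentCone R x, ⟪z, y⟫ ≤ 0 := by
    rintro y ⟨τ, hτ, hy⟩
    have h1 := hz (x + τ • y)
    rw [add_sub_cancel_left, real_inner_smul_right, hRx] at h1
    have h2 : ((a + τ * ⟪z, y⟫ : ℝ) : EReal) ≤ (a : EReal) := by
      rw [EReal.coe_add]
      exact h1.trans (hy.trans_eq hRx)
    have h3 : a + τ * ⟪z, y⟫ ≤ a := EReal.coe_le_coe_iff.mp h2
    nlinarith
  have hclosed : closure (descentCone R x) ⊆ {y | ⟪z, y⟫ ≤ 0} :=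
    closure_minimal hD
      (isClosed_le (Continuous.inner continuous_const continuous_id) continuous_const)
  exact hclosed hp

end Geom

section Proj
variable {E : Type*} [NormedAddCommGroup E] [InnerProductSpace ℝ E]

lemma inner_sub_proj_nonneg {g p : E}
    (hq : ∀ t : ℝ, 0 ≤ t → t ≤ 1 → ‖g - p‖ ≤ ‖g - t • p‖) :
    0 ≤ ⟪g - p, p⟫ := by
  have e : ∀ t : ℝ, ‖g - t • p‖ ^ 2 = ‖g‖ ^ 2 - 2 * t * ⟪g, p⟫ + t ^ 2 * ‖p‖ ^ 2 := by
    intro t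
    rw [norm_sub_sq_real, real_inner_smul_right, norm_smul]
    simp only [Real.norm_eq_abs, mul_pow, sq_abs]
    ring
  have sq : ∀ t : ℝ, 0 ≤ t → t ≤ 1 →
      ‖g‖ ^ 2 - 2 * ⟪g, p⟫ + ‖p‖ ^ 2 ≤ ‖g‖ ^ 2 - 2 * t * ⟪g, p⟫ + t ^ 2 * ‖p‖ ^ 2 := by
    intro t ht ht1
    have := hq t ht ht1
    have h2 := mul_self_le_mul_self (norm_nonneg (g - p)) this
    rw [← pow_two, ← pow_two] at h2
    rw [← e t]
    calc ‖g‖ ^ 2 - 2 * ⟪g, p⟫ + ‖p‖ ^ 2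
        = ‖g - p‖ ^ 2 := by rw [norm_sub_sq_real]
      _ ≤ _ := h2
  rw [inner_sub_left, real_inner_self_eq_norm_sq]
  by_contra hc
  push_neg at hc
  set c : ℝ := ⟪g, p⟫ - ‖p‖ ^ 2 with hcdef
  have hc' : c < 0 := hc
  set K : ℝ := ‖p‖ ^ 2 + 1 with hK
  have hKpos : (0:ℝ) < K := by positivity
  have h0 := sq 0 le_rfl zero_le_one
  have hcl : -(‖p‖ ^ 2) / 2 ≤ c := by simp at h0; nlinarith [hcdef]
  set u : ℝ := c / K with hudef
  have hu : u * K = c := div_mul_cancel₀ _ hKpos.ne'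
  have huneg : u < 0 := div_neg_of_neg_of_pos hc' hKpos
  have htmem : 0 ≤ 1 + u := by
    have hm1 : -1 ≤ u := by
      rw [neg_le, hudef, ← neg_div, div_le_one hKpos]
      have := sq_nonneg ‖p‖
      linarith
    linarith
  have ht1 : 1 + u ≤ 1 := by linarith
  have h1 := sq (1 + u) htmem ht1
  have hgp : ⟪g, p⟫ = c + ‖p‖ ^ 2 := by rw [hcdef]; ring
  have h2 : 0 ≤ -2 * u * c + u ^ 2 * ‖p‖ ^ 2 := by nlinarith [h1, hgp]
  have h3 : u ^ 2 ≤ 0 := by nlinarith [h2, hu]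
  have h4 : u = 0 := by nlinarith [sq_nonneg u]
  rw [h4, zero_mul] at hu
  linarith

lemma norm_proj_le {g p s : E} (hr : 0 ≤ ⟪g - p, p⟫) (hs : ⟪p, s⟫ ≤ 0) :
    ‖p‖ ≤ ‖g - s‖ := by
  have hid : g - s = p + ((g - p) - s) := by abel
  have hexp : ‖g - s‖ ^ 2 = ‖p‖ ^ 2 + 2 * ⟪p, (g - p) - s⟫ + ‖(g - p) - s‖ ^ 2 := by
    rw [hid, norm_add_sq_real]
  have hinner : ⟪p, (g - p) - s⟫ = ⟪g - p, p⟫ - ⟪p, s⟫ := by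
    rw [inner_sub_right, real_inner_comm]
  have hsq : ‖p‖ ^ 2 ≤ ‖g - s‖ ^ 2 := by
    rw [hexp, hinner]
    nlinarith [sq_nonneg ‖(g - p) - s‖]
  have := Real.sqrt_le_sqrt hsq
  rwa [Real.sqrt_sq (norm_nonneg _), Real.sqrt_sq (norm_nonneg _)] at this

end Proj

/-- For a proper convex function `R : ℝ^d → ℝ ∪ {±∞}` and a point
`x` such that `∂R(x)` is nonempty, compact, and does not contain the origin, the
statistical dimension of the descent cone satisfies
`δ(D(R,x)) ≤ inf_{τ ≥ 0} E[dist²(g, τ·∂R(x))]` for a standard Gaussian `g`. -/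
theorem statdim_descentCone_le_inf_expected_dist_sq (d : ℕ)
    (R : EuclideanSpace ℝ (Fin d) → EReal) (hR : ProperConvexFn R)
    (x : EuclideanSpace ℝ (Fin d))
    (hne : (subdiff R x).Nonempty) (hcpt : IsCompact (subdiff R x))
    (h0 : (0 : EuclideanSpace ℝ (Fin d)) ∉ subdiff R x)
    (P : EuclideanSpace ℝ (Fin d) → EuclideanSpace ℝ (Fin d))
    (hP : IsProjOn (closure (descentCone R x)) P) :
    (∫ g, ‖P g‖ ^ 2 ∂(stdGE d)) ≤
      ⨅ τ : {t : ℝ // 0 ≤ t},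
        ∫ g, (Metric.infDist g ((τ : ℝ) • subdiff R x)) ^ 2 ∂(stdGE d) := by
  classical
  obtain ⟨z₀, hz₀⟩ := hne
  have hnormsq := integrable_normsq_stdGE d
  have hnorm : Integrable (fun g : EuclideanSpace ℝ (Fin d) => ‖g‖) (stdGE d) := by
    refine (hnormsq.add (integrable_const 1)).mono'
      continuous_norm.aestronglyMeasurable (ae_of_all _ fun g => ?_)
    simp only [Pi.add_apply]
    rw [Real.norm_eq_abs, abs_of_nonneg (norm_nonneg g)]
    nlinarith [sq_nonneg (‖g‖ - 1)]
  apply le_ciInf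
  rintro ⟨τ, hτ⟩
  set S : Set (EuclideanSpace ℝ (Fin d)) := τ • subdiff R x with hS
  have hSne : S.Nonempty := ⟨τ • z₀, Set.smul_mem_smul_set hz₀⟩
  -- pointwise bound
  have hpt : ∀ g, ‖P g‖ ^ 2 ≤ (Metric.infDist g S) ^ 2 := by
    intro g
    have hpC := (hP g).1
    have hr : 0 ≤ ⟪g - P g, P g⟫ :=
      inner_sub_proj_nonneg fun t ht _ =>
        (hP g).2 _ (smul_mem_closure_descentCone ht hpC)
    have hle : ‖P g‖ ≤ Metric.infDist g S := by
      have hall : ∀ s ∈ S, ‖P g‖ ≤ dist g s := by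
        rintro s ⟨z, hz, rfl⟩
        rw [dist_eq_norm]
        refine norm_proj_le hr ?_
        rw [real_inner_smul_right, real_inner_comm]
        exact mul_nonpos_of_nonneg_of_nonpos hτ (inner_nonpos_of_subdiff hR hz hpC)
      rw [Metric.infDist_eq_iInf]
      haveI : Nonempty S := hSne.to_subtype
      exact le_ciInf fun s => hall s s.2
    exact pow_le_pow_left₀ (norm_nonneg _) hle 2
  -- integrability of the majorant
  set C : ℝ := ‖τ • z₀‖ with hC
  have hmaj : Integrable
      (fun g : EuclideanSpace ℝ (Fin d) => (‖g‖ + C) ^ 2) (stdGE d) := by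
    have heq : (fun g : EuclideanSpace ℝ (Fin d) => (‖g‖ + C) ^ 2)
        = fun g => ‖g‖ ^ 2 + (2 * C) * ‖g‖ + C ^ 2 := funext fun g => by ring
    rw [heq]
    exact (hnormsq.add (hnorm.const_mul _)).add (integrable_const _)
  have hint : Integrable
      (fun g : EuclideanSpace ℝ (Fin d) => (Metric.infDist g S) ^ 2) (stdGE d) := by
    refine hmaj.mono' ((Metric.continuous_infDist_pt S).pow 2).aestronglyMeasurable
      (ae_of_all _ fun g => ?_)
    rw [Real.norm_eq_abs, abs_of_nonneg (by positivity)]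
    refine pow_le_pow_left₀ Metric.infDist_nonneg ?_ 2
    calc Metric.infDist g S ≤ dist g (τ • z₀) :=
          Metric.infDist_le_dist_of_mem (Set.smul_mem_smul_set hz₀)
      _ ≤ ‖g‖ + C := by rw [dist_eq_norm]; exact norm_sub_le _ _
  exact integral_mono_of_nonneg (ae_of_all _ fun g => by positivity) hint
    (ae_of_all _ hpt)
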